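/- arXiv:1002.2021 — 2 statements merged into one kernel-verified Lean document; each statement's English description precedes it below -/
import Mathlib

section
/- Let D ≥ 1, M ≥ 2, u' ∈ ℝ^D and θ' > 0, and let f(ξ) = Σ_{|α| ≤ M} f_α 𝓗_{θ',α}(v') with v' = (ξ − u')/√θ'. Define ρ = ∫_{ℝ^D} f(ξ) dξ, ρ u = ∫_{ℝ^D} ξ f(ξ) dξ, and ρ|u|² + Dρθ = ∫_{ℝ^D} |ξ|² f(ξ) dξ. Then: (i) ρ = f_0; (ii) ρ u = ρ u' + (f_{e_1}, …, f_{e_D})ᵀ; (iii) ρ|u|² + Dρθ = 2ρ u·u' − ρ|u'|² + Σ_{d=1}^D (θ' f_0 + 2 f_{2e_d}). -/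
open MeasureTheory

/-- The probabilists' Hermite polynomial `He n`, evaluated at a real number. -/
noncomputable def He (n : ℕ) (x : ℝ) : ℝ :=
  Polynomial.aeval x (Polynomial.hermite n)

/-- The basis function `𝓗_{θ,α}(v) = ∏_d (2π)^(-1/2) θ^(-(α_d+1)/2) He_{α_d}(v_d) e^(-v_d²/2)`. -/
noncomputable def Hb {D : ℕ} (θ : ℝ) (α : Fin D → ℕ) (v : Fin D → ℝ) : ℝ :=
  ∏ d, ((Real.sqrt (2 * Real.pi))⁻¹ * θ ^ (-(((α d : ℝ) + 1) / 2)) * He (α d) (v d) *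
    Real.exp (-(v d) ^ 2 / 2))


/-- The finite set of multi-indices `α : Fin D → ℕ` with `|α| ≤ M`. -/
noncomputable def multiIndices (D M : ℕ) : Finset (Fin D → ℕ) :=
  ((Finset.univ : Finset (Fin D → Fin (M + 1))).image (fun a => fun d => (a d : ℕ))).filter
    (fun α => (∑ d, α d) ≤ M)

/-- The normalization constant `C_{θ,α} = (2π)^{D/2} θ^{D+|α|} / (α₁!⋯α_D!)`. -/
noncomputable def Cc (D : ℕ) (θ : ℝ) (α : Fin D → ℕ) : ℝ :=
  (2 * Real.pi) ^ ((D : ℝ) / 2) * θ ^ (D + ∑ d, α d) / ∏ d, (Nat.factorial (α d) : ℝ)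

/-!
Write `𝓗_{θ',α}((ξ - u') / √θ') = ∏_d g_{α_d}(ξ_d)` with
`g_n(t) = (2π)^(-1/2) θ^(-(n+1)/2) He_n((t - u₀)/√θ) exp(-(t - u₀)²/(2θ))`.
This normalization makes `g_0` the density of `N(u₀, θ)` and, by `He_{n+1} = x He_n - He_n'`,
gives `g_{n+1} = -g_n'`. Integrating by parts, `∫ P g_{n+1} = ∫ P' g_n` for every polynomial `P`,
so the moments `∫ g_n`, `∫ t g_n`, `∫ t² g_n` vanish for `n > 2` and are otherwise computed from
`∫ g_0 = 1` and `(t - u₀) g_0 = θ g_1`. By Fubini, the moments of `f` of order at most two in `ξ_i`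
therefore only see the coefficients of `α = 0`, `e_i` and `2e_i`.
-/

open Real Polynomial ProbabilityTheory

lemma He_zero (x : ℝ) : He 0 x = 1 := by simp [He]

lemma He_one (x : ℝ) : He 1 x = x := by simp [He]

lemma hasDerivAt_He (n : ℕ) (x : ℝ) : HasDerivAt (He n) (x * He n x - He (n + 1) x) x := by
  have h : x * He n x - He (n + 1) x = aeval x (derivative (hermite n)) := by
    simp [He, hermite_succ]
  exact h ▸ (hermite n).hasDerivAt_aeval x

lemma integrable_eval_mul_exp_neg_mul_sq {b : ℝ} (hb : 0 < b) (Q : ℝ[X]) :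
    Integrable fun x : ℝ => Q.eval x * exp (-b * x ^ 2) := by
  simp_rw [eval_eq_sum_range, Finset.sum_mul]
  refine integrable_finsetSum _ fun i _ => ?_
  have h := integrable_rpow_mul_exp_neg_mul_sq hb (s := i) (by linarith [i.cast_nonneg (α := ℝ)])
  simpa [mul_assoc, rpow_natCast] using h.const_mul (Q.coeff i)

noncomputable def hermiteFun (θ u₀ : ℝ) (n : ℕ) (t : ℝ) : ℝ :=
  (√(2 * π))⁻¹ * θ ^ (-(((n : ℝ) + 1) / 2)) * He n ((t - u₀) / √θ) *
    exp (-((t - u₀) / √θ) ^ 2 / 2)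

lemma Hb_eq_prod_hermiteFun {D : ℕ} (θ : ℝ) (u : Fin D → ℝ) (α : Fin D → ℕ) (ξ : Fin D → ℝ) :
    Hb θ α (fun d => (ξ d - u d) / √θ) = ∏ d, hermiteFun θ (u d) (α d) (ξ d) := rfl

section OneDimensional

variable {θ : ℝ} (hθ : 0 < θ) (u₀ : ℝ)
include hθ

lemma rpow_neg_half_succ (n : ℕ) : θ ^ (-(((n : ℝ) + 1) / 2)) = (√θ ^ (n + 1))⁻¹ := by
  rw [sqrt_eq_rpow, ← rpow_natCast, ← rpow_mul hθ.le, rpow_neg hθ.le]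
  push_cast
  ring_nf

lemma hermiteFun_zero : hermiteFun θ u₀ 0 = gaussianPDFReal u₀ θ.toNNReal := by
  ext t
  have hs := sqrt_pos.2 hθ
  rw [hermiteFun, gaussianPDFReal, coe_toNNReal _ hθ.le, He_zero, rpow_neg_half_succ hθ 0,
    sqrt_mul (x := 2 * π) (by positivity), div_pow, zero_add, pow_one, sq_sqrt hθ.le]
  field_simp

lemma hasDerivAt_hermiteFun (n : ℕ) (t : ℝ) :
    HasDerivAt (hermiteFun θ u₀ n) (-hermiteFun θ u₀ (n + 1) t) t := by
  have hs := (sqrt_pos.2 hθ).ne'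
  have hv : HasDerivAt (fun t => (t - u₀) / √θ) (1 / √θ) t :=
    ((hasDerivAt_id t).sub_const u₀).div_const _
  have h := (((hasDerivAt_He n _).comp t hv).mul ((hv.pow 2).neg.div_const 2).exp).const_mul
    ((√(2 * π))⁻¹ * θ ^ (-(((n : ℝ) + 1) / 2)))
  refine (h.congr_of_eventuallyEq (.of_forall fun y => ?_)).congr_deriv ?_
  · simp only [hermiteFun, Function.comp, Pi.mul_apply, Pi.pow_apply, Pi.neg_apply]
    ring
  · simp only [hermiteFun, rpow_neg_half_succ hθ, Function.comp, Pi.pow_apply, Pi.neg_apply]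
    push_cast
    field_simp
    ring

lemma integrable_eval_mul_hermiteFun (P : ℝ[X]) (n : ℕ) :
    Integrable fun t => P.eval t * hermiteFun θ u₀ n t := by
  have hs := (sqrt_pos.2 hθ).ne'
  have h := integrable_eval_mul_exp_neg_mul_sq (b := 1 / 2) (by norm_num)
    (P.comp (C u₀ + C √θ * X) * (hermite n).map (algebraMap ℤ ℝ))
  refine (((h.comp_div hs).comp_sub_right u₀).const_mul
    ((√(2 * π))⁻¹ * θ ^ (-(((n : ℝ) + 1) / 2)))).congr (.of_forall fun t => ?_)
  simp only [hermiteFun, He, eval_mul, eval_comp, eval_add, eval_C, eval_X, eval_map_algebraMap,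
    mul_div_cancel₀ _ hs, add_sub_cancel]
  ring_nf

lemma integrable_hermiteFun (n : ℕ) : Integrable (hermiteFun θ u₀ n) := by
  simpa using integrable_eval_mul_hermiteFun hθ u₀ 1 n

lemma integrable_mul_hermiteFun (n : ℕ) : Integrable fun t => t * hermiteFun θ u₀ n t := by
  simpa using integrable_eval_mul_hermiteFun hθ u₀ X n

lemma integral_eval_mul_hermiteFun_succ (P : ℝ[X]) (n : ℕ) :
    ∫ t, P.eval t * hermiteFun θ u₀ (n + 1) t =
      ∫ t, P.derivative.eval t * hermiteFun θ u₀ n t := by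
  have h := integral_mul_deriv_eq_deriv_mul_of_integrable (fun t _ => P.hasDerivAt t)
    (fun t _ => hasDerivAt_hermiteFun hθ u₀ n t)
    (by simpa [Pi.mul_def] using (integrable_eval_mul_hermiteFun hθ u₀ P (n + 1)).neg)
    (integrable_eval_mul_hermiteFun hθ u₀ _ n) (integrable_eval_mul_hermiteFun hθ u₀ P n)
  simpa [integral_neg] using h

lemma sub_mul_hermiteFun_zero (t : ℝ) :
    (t - u₀) * hermiteFun θ u₀ 0 t = θ * hermiteFun θ u₀ 1 t := by
  have hs := (sqrt_pos.2 hθ).ne'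
  simp only [hermiteFun, rpow_neg_half_succ hθ, He_zero, He_one]
  field_simp
  rw [sq_sqrt hθ.le]
  ring

lemma integral_hermiteFun (n : ℕ) : ∫ t, hermiteFun θ u₀ n t = if n = 0 then 1 else 0 := by
  rcases n with _ | n
  · simpa [hermiteFun_zero hθ] using
      integral_gaussianPDFReal_eq_one u₀ (v := θ.toNNReal) (by simpa using hθ)
  · simpa using integral_eval_mul_hermiteFun_succ hθ u₀ 1 n

lemma integral_mul_hermiteFun (n : ℕ) :
    ∫ t, t * hermiteFun θ u₀ n t = u₀ * (if n = 0 then 1 else 0) + if n = 1 then 1 else 0 := by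
  rcases n with _ | n
  · have h (t : ℝ) :
        t * hermiteFun θ u₀ 0 t = u₀ * hermiteFun θ u₀ 0 t + θ * hermiteFun θ u₀ 1 t := by
      linear_combination sub_mul_hermiteFun_zero hθ u₀ t
    simp_rw [h]
    rw [integral_add ((integrable_hermiteFun hθ u₀ 0).const_mul _)
      ((integrable_hermiteFun hθ u₀ 1).const_mul _), integral_const_mul, integral_const_mul,
      integral_hermiteFun hθ, integral_hermiteFun hθ]
    simp
  · simpa [integral_hermiteFun hθ] using integral_eval_mul_hermiteFun_succ hθ u₀ X n

lemma integral_sq_mul_hermiteFun (n : ℕ) :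
    ∫ t, t ^ 2 * hermiteFun θ u₀ n t = (u₀ ^ 2 + θ) * (if n = 0 then 1 else 0) +
      2 * u₀ * (if n = 1 then 1 else 0) + 2 * if n = 2 then 1 else 0 := by
  rcases n with _ | n
  · have h (t : ℝ) : t ^ 2 * hermiteFun θ u₀ 0 t =
        u₀ * (t * hermiteFun θ u₀ 0 t) + θ * (t * hermiteFun θ u₀ 1 t) := by
      linear_combination t * sub_mul_hermiteFun_zero hθ u₀ t
    simp_rw [h]
    rw [integral_add ((integrable_mul_hermiteFun hθ u₀ 0).const_mul _)
      ((integrable_mul_hermiteFun hθ u₀ 1).const_mul _), integral_const_mul, integral_const_mul,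
      integral_mul_hermiteFun hθ, integral_mul_hermiteFun hθ]
    simp only [↓reduceIte, mul_one, mul_zero, add_zero, zero_add, one_ne_zero, zero_ne_one,
      OfNat.zero_ne_ofNat]
    ring
  · have h := integral_eval_mul_hermiteFun_succ hθ u₀ (X ^ 2) n
    simp only [derivative_X_sq, eval_mul, eval_pow, eval_C, eval_X, mul_assoc,
      integral_const_mul] at h
    rw [h, integral_mul_hermiteFun hθ]
    rcases n with _ | _ | n <;> simp

end OneDimensional

section Product

variable {ι : Type*} [Fintype ι] [DecidableEq ι]

lemma mul_prod_eq_prod_update (φ : ℝ → ℝ) (g : ι → ℝ → ℝ) (i : ι) (ξ : ι → ℝ) :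
    φ (ξ i) * ∏ d, g d (ξ d) = ∏ d, Function.update g i (fun t => φ t * g i t) d (ξ d) := by
  rw [← Finset.mul_prod_erase _ _ (Finset.mem_univ i),
    ← Finset.mul_prod_erase _ _ (Finset.mem_univ i), Function.update_self, mul_assoc]
  congr 2
  refine Finset.prod_congr rfl fun d hd => ?_
  rw [Function.update_of_ne (Finset.ne_of_mem_erase hd)]

lemma integral_apply_mul_prod (φ : ℝ → ℝ) (g : ι → ℝ → ℝ) (i : ι) :
    ∫ ξ : ι → ℝ, φ (ξ i) * ∏ d, g d (ξ d) =
      (∫ t, φ t * g i t) * ∏ d ∈ Finset.univ.erase i, ∫ t, g d t := by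
  simp only [mul_prod_eq_prod_update φ g i]
  rw [integral_fintype_prod_volume_eq_prod, ← Finset.mul_prod_erase _ _ (Finset.mem_univ i),
    Function.update_self]
  congr 1
  refine Finset.prod_congr rfl fun d hd => ?_
  rw [Function.update_of_ne (Finset.ne_of_mem_erase hd)]

lemma integrable_apply_mul_prod {φ : ℝ → ℝ} {g : ι → ℝ → ℝ} {i : ι}
    (hφ : Integrable fun t => φ t * g i t) (hg : ∀ d, Integrable (g d)) :
    Integrable fun ξ : ι → ℝ => φ (ξ i) * ∏ d, g d (ξ d) := by
  simp only [mul_prod_eq_prod_update φ g i]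
  refine Integrable.fintype_prod fun d => ?_
  rcases eq_or_ne d i with rfl | hd
  · simpa using hφ
  · simpa [Function.update_of_ne hd] using hg d

lemma boole_mul_prod_erase_boole (α : ι → ℕ) (i : ι) (k : ℕ) :
    ((if α i = k then 1 else 0) * ∏ d ∈ Finset.univ.erase i, if α d = 0 then 1 else 0 : ℝ) =
      if α = Pi.single i k then 1 else 0 := by
  calc _ = ∏ d, if α d = (Pi.single i k : ι → ℕ) d then (1 : ℝ) else 0 := by
        rw [← Finset.mul_prod_erase _ _ (Finset.mem_univ i), Pi.single_eq_same]
        congr 1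
        refine Finset.prod_congr rfl fun d hd => ?_
        rw [Pi.single_eq_of_ne (Finset.ne_of_mem_erase hd)]
    _ = _ := by
        rw [Fintype.prod_boole]
        exact if_congr funext_iff.symm rfl rfl

end Product

section Expansion

noncomputable def hermiteExpansion {ι : Type*} [Fintype ι] (θ : ℝ) (u : ι → ℝ)
    (S : Finset (ι → ℕ)) (c : (ι → ℕ) → ℝ) (ξ : ι → ℝ) : ℝ :=
  ∑ α ∈ S, c α * ∏ d, hermiteFun θ (u d) (α d) (ξ d)

variable {ι : Type*} [Fintype ι] {θ : ℝ} (u : ι → ℝ) (S : Finset (ι → ℕ)) (c : (ι → ℕ) → ℝ)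

lemma integral_prod_hermiteFun (hθ : 0 < θ) (α : ι → ℕ) :
    ∫ ξ : ι → ℝ, ∏ d, hermiteFun θ (u d) (α d) (ξ d) = if α = 0 then 1 else 0 := by
  simp_rw [integral_fintype_prod_volume_eq_prod, integral_hermiteFun hθ, Fintype.prod_boole]
  exact if_congr funext_iff.symm rfl rfl

lemma integrable_prod_hermiteFun (hθ : 0 < θ) (α : ι → ℕ) :
    Integrable fun ξ : ι → ℝ => ∏ d, hermiteFun θ (u d) (α d) (ξ d) :=
  Integrable.fintype_prod fun d => integrable_hermiteFun hθ (u d) (α d)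

lemma integral_hermiteExpansion (hθ : 0 < θ) (hS : 0 ∈ S) :
    ∫ ξ, hermiteExpansion θ u S c ξ = c 0 := by
  unfold hermiteExpansion
  rw [integral_finsetSum _ fun α _ => (integrable_prod_hermiteFun u hθ α).const_mul _]
  simp_rw [integral_const_mul, integral_prod_hermiteFun u hθ]
  simp [hS]

variable [DecidableEq ι]

lemma integral_apply_mul_prod_hermiteFun (hθ : 0 < θ) (α : ι → ℕ) (i : ι) :
    ∫ ξ : ι → ℝ, ξ i * ∏ d, hermiteFun θ (u d) (α d) (ξ d) =
      u i * (if α = 0 then 1 else 0) + if α = Pi.single i 1 then 1 else 0 := by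
  rw [integral_apply_mul_prod (fun t => t), integral_mul_hermiteFun hθ]
  simp_rw [integral_hermiteFun hθ]
  simp only [add_mul, mul_assoc, boole_mul_prod_erase_boole, Pi.single_zero]

lemma integral_apply_sq_mul_prod_hermiteFun (hθ : 0 < θ) (α : ι → ℕ) (i : ι) :
    ∫ ξ : ι → ℝ, ξ i ^ 2 * ∏ d, hermiteFun θ (u d) (α d) (ξ d) =
      (u i ^ 2 + θ) * (if α = 0 then 1 else 0) +
        2 * u i * (if α = Pi.single i 1 then 1 else 0) +
          2 * if α = Pi.single i 2 then 1 else 0 := by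
  rw [integral_apply_mul_prod (fun t => t ^ 2), integral_sq_mul_hermiteFun hθ]
  simp_rw [integral_hermiteFun hθ]
  simp only [add_mul, mul_assoc, boole_mul_prod_erase_boole, Pi.single_zero]

lemma integrable_eval_apply_mul_prod_hermiteFun (hθ : 0 < θ) (P : ℝ[X]) (α : ι → ℕ) (i : ι) :
    Integrable fun ξ : ι → ℝ => P.eval (ξ i) * ∏ d, hermiteFun θ (u d) (α d) (ξ d) :=
  integrable_apply_mul_prod (g := fun d => hermiteFun θ (u d) (α d))
    (integrable_eval_mul_hermiteFun hθ _ P _) fun _ => integrable_hermiteFun hθ _ _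

lemma integrable_eval_mul_hermiteExpansion (hθ : 0 < θ) (P : ℝ[X]) (i : ι) :
    Integrable fun ξ => P.eval (ξ i) * hermiteExpansion θ u S c ξ := by
  simp_rw [hermiteExpansion, Finset.mul_sum, mul_left_comm (P.eval _)]
  exact integrable_finsetSum _ fun α _ =>
    (integrable_eval_apply_mul_prod_hermiteFun u hθ P α i).const_mul _

lemma integral_eval_mul_hermiteExpansion (hθ : 0 < θ) (P : ℝ[X]) (i : ι) :
    ∫ ξ : ι → ℝ, P.eval (ξ i) * hermiteExpansion θ u S c ξ =
      ∑ α ∈ S, c α * ∫ ξ : ι → ℝ, P.eval (ξ i) * ∏ d, hermiteFun θ (u d) (α d) (ξ d) := by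
  calc _ = ∫ ξ : ι → ℝ,
        ∑ α ∈ S, c α * (P.eval (ξ i) * ∏ d, hermiteFun θ (u d) (α d) (ξ d)) := by
        congr 1 with ξ
        rw [hermiteExpansion, Finset.mul_sum]
        exact Finset.sum_congr rfl fun _ _ => mul_left_comm _ _ _
    _ = _ := by
        rw [integral_finsetSum _ fun α _ =>
          (integrable_eval_apply_mul_prod_hermiteFun u hθ P α i).const_mul _]
        simp_rw [integral_const_mul]

lemma integral_apply_mul_hermiteExpansion (hθ : 0 < θ) (i : ι) (hS : 0 ∈ S)
    (hS₁ : Pi.single i 1 ∈ S) :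
    ∫ ξ : ι → ℝ, ξ i * hermiteExpansion θ u S c ξ =
      u i * c 0 + c (Pi.single i 1) := by
  simpa [integral_apply_mul_prod_hermiteFun u hθ, mul_add, Finset.sum_add_distrib, hS, hS₁,
    mul_comm] using integral_eval_mul_hermiteExpansion u S c hθ X i

lemma integral_apply_sq_mul_hermiteExpansion (hθ : 0 < θ) (i : ι) (hS : 0 ∈ S)
    (hS₁ : Pi.single i 1 ∈ S) (hS₂ : Pi.single i 2 ∈ S) :
    ∫ ξ : ι → ℝ, ξ i ^ 2 * hermiteExpansion θ u S c ξ =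
      (u i ^ 2 + θ) * c 0 + 2 * u i * c (Pi.single i 1) + 2 * c (Pi.single i 2) := by
  have h := integral_eval_mul_hermiteExpansion u S c hθ (X ^ 2) i
  simp only [eval_pow, eval_X, integral_apply_sq_mul_prod_hermiteFun u hθ, mul_add,
    Finset.sum_add_distrib] at h
  rw [h]
  simp only [mul_ite, mul_one, mul_zero, Finset.sum_ite_eq', hS, hS₁, hS₂, if_true]
  ring

end Expansion

lemma mem_multiIndices {D M : ℕ} {α : Fin D → ℕ} : α ∈ multiIndices D M ↔ ∑ d, α d ≤ M := by
  refine ⟨fun h => (Finset.mem_filter.1 h).2, fun h => Finset.mem_filter.2 ⟨?_, h⟩⟩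
  refine Finset.mem_image.2 ⟨fun d => ⟨α d, ?_⟩, Finset.mem_univ _, rfl⟩
  have := Finset.single_le_sum (fun d _ => Nat.zero_le (α d)) (Finset.mem_univ d)
  omega

lemma zero_mem_multiIndices {D M : ℕ} : 0 ∈ multiIndices D M :=
  mem_multiIndices.2 (by simp)

lemma single_mem_multiIndices {D M k : ℕ} (i : Fin D) (hk : k ≤ M) :
    Pi.single i k ∈ multiIndices D M :=
  mem_multiIndices.2 (by simpa using hk)

theorem stmt12_general (D M : ℕ) (hM : 2 ≤ M)
    (u' : Fin D → ℝ) (θ' : ℝ) (hθ' : 0 < θ')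
    (c : (Fin D → ℕ) → ℝ) (f : (Fin D → ℝ) → ℝ)
    (hf : f = fun ξ => ∑ α ∈ multiIndices D M,
      c α * Hb θ' α (fun d => (ξ d - u' d) / Real.sqrt θ'))
    (ρ : ℝ) (u : Fin D → ℝ) (θ : ℝ)
    (hρ : ρ = ∫ ξ, f ξ)
    (hu : ∀ i, ρ * u i = ∫ ξ, ξ i * f ξ)
    (hθ : ρ * (∑ i, (u i) ^ 2) + D * ρ * θ = ∫ ξ, (∑ i, (ξ i) ^ 2) * f ξ) :
    ρ = c (fun _ => 0) ∧
    (∀ i : Fin D, ρ * u i = ρ * u' i + c (fun k => if k = i then 1 else 0)) ∧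
    ρ * (∑ i, (u i) ^ 2) + D * ρ * θ =
      2 * ρ * (∑ i, u i * u' i) - ρ * (∑ i, (u' i) ^ 2) +
        ∑ d : Fin D, (θ' * c (fun _ => 0) + 2 * c (fun k => if k = d then 2 else 0)) := by
  replace hf : f = hermiteExpansion θ' u' (multiIndices D M) c := by
    ext ξ
    simp only [hf, hermiteExpansion, Hb_eq_prod_hermiteFun]
  have hS₀ : 0 ∈ multiIndices D M := zero_mem_multiIndices
  have hS₁ (i : Fin D) := single_mem_multiIndices (M := M) i (by omega : 1 ≤ M)
  have hS₂ (i : Fin D) := single_mem_multiIndices (M := M) i hM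
  have single_eq (i : Fin D) (k : ℕ) : Pi.single i k = fun j => if j = i then k else 0 := by
    ext j
    exact Pi.single_apply i k j
  have hρ₀ : ρ = c 0 := by
    rw [hρ, hf, integral_hermiteExpansion u' _ c hθ' hS₀]
  have hmean (i : Fin D) : ρ * u i = ρ * u' i + c (Pi.single i 1) := by
    rw [hu i, hf, integral_apply_mul_hermiteExpansion u' _ c hθ' i hS₀ (hS₁ i), hρ₀, mul_comm]
  refine ⟨hρ₀, fun i => single_eq i 1 ▸ hmean i, ?_⟩
  have hsq (i : Fin D) : ∫ ξ, ξ i ^ 2 * f ξ =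
      (u' i ^ 2 + θ') * c 0 + 2 * u' i * c (Pi.single i 1) + 2 * c (Pi.single i 2) := by
    rw [hf, integral_apply_sq_mul_hermiteExpansion u' _ c hθ' i hS₀ (hS₁ i) (hS₂ i)]
  have hint (i : Fin D) : Integrable fun ξ => ξ i ^ 2 * f ξ := by
    have h := integrable_eval_mul_hermiteExpansion u' (multiIndices D M) c hθ' (X ^ 2) i
    simp only [eval_pow, eval_X] at h
    rwa [hf]
  simp_rw [hθ, Finset.sum_mul, ← single_eq]
  rw [integral_finsetSum _ fun i _ => hint i]
  simp_rw [hsq, Finset.mul_sum, ← Finset.sum_sub_distrib, ← Finset.sum_add_distrib]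
  refine Finset.sum_congr rfl fun i _ => ?_
  subst hρ₀
  linear_combination (-2 * u' i) * hmean i

/-- macroscopic quantities of a truncated Hermite expansion around
`(u',θ')`: `ρ = f₀`, `ρu = ρu' + (f_{e_d})_d`, and
`ρ|u|² + Dρθ = 2ρ u·u' − ρ|u'|² + Σ_d (θ' f₀ + 2 f_{2e_d})`. -/
theorem stmt12 (D M : ℕ) (hD : 1 ≤ D) (hM : 2 ≤ M)
    (u' : Fin D → ℝ) (θ' : ℝ) (hθ' : 0 < θ')
    (c : (Fin D → ℕ) → ℝ) (f : (Fin D → ℝ) → ℝ)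
    (hf : f = fun ξ => ∑ α ∈ multiIndices D M,
      c α * Hb θ' α (fun d => (ξ d - u' d) / Real.sqrt θ'))
    (ρ : ℝ) (u : Fin D → ℝ) (θ : ℝ)
    (hρ : ρ = ∫ ξ, f ξ)
    (hu : ∀ i, ρ * u i = ∫ ξ, ξ i * f ξ)
    (hθ : ρ * (∑ i, (u i) ^ 2) + D * ρ * θ = ∫ ξ, (∑ i, (ξ i) ^ 2) * f ξ) :
    ρ = c (fun _ => 0) ∧
    (∀ i : Fin D, ρ * u i = ρ * u' i + c (fun k => if k = i then 1 else 0)) ∧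
    ρ * (∑ i, (u i) ^ 2) + D * ρ * θ =
      2 * ρ * (∑ i, u i * u' i) - ρ * (∑ i, (u' i) ^ 2) +
        ∑ d : Fin D, (θ' * c (fun _ => 0) + 2 * c (fun k => if k = d then 2 else 0)) :=
  stmt12_general D M hM u' θ' hθ' c f hf ρ u θ hρ hu hθ
end

section
/- Let D ≥ 1, θ₁ > 0, θ̂ > 0, w, v ∈ ℝ^D, and define A(v,w,τ) ∈ ℝ^D componentwise by A_d = [(θ̂−1)τ+1] v_d + w_d τ, R(τ) = (θ̂−1)/((θ̂−1)τ+1) and S(τ) = 1/((θ̂−1)τ+1) for τ ∈ [0,1]. Let {F_α}_{α ∈ ℕ^D} be a family of differentiable functions [0,1] → ℝ that is zero for all but finitely many α, and set F(v,τ) = Σ_{α} F_α(τ) S(τ)^{−(|α|+D)} 𝓗_{θ₁,α}(A(v,w,τ)). Then for all τ ∈ [0,1], ∂F/∂τ (v,τ) = Σ_{α} S(τ)^{−(|α|+D)} 𝓗_{θ₁,α}(A(v,w,τ)) · { F_α'(τ) − Σ_{d=1}^D S(τ)² [ θ₁ R(τ) F_{α−2e_d}(τ) + w_d √θ₁ F_{α−e_d}(τ)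 ] }, where F_β is taken to be identically zero whenever β has a negative component. -/
open MeasureTheory

/-!
Write `P(τ) = (θ̂ - 1) τ + 1`, so that `S = 1/P`, and let `G_α = S^{-(|α|+D)} 𝓗_{θ₁,α}(A)`.
Then `G_α = P^{|α|+D} ∏_d φ_{α_d}(A_d)` with `φ_n` the one-dimensional Hermite functions, which
satisfy `φ_n' = -√θ₁ φ_{n+1}` and `θ₁ φ_{n+2}(x) = √θ₁ x φ_{n+1}(x) - (n+1) φ_n(x)`.
Together with `P A_d' = (θ̂ - 1) A_d + w_d` this gives
`G_α' = -S² Σ_d (θ₁ R G_{α+2e_d} + w_d √θ₁ G_{α+e_d})`.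
The product rule in the finitely supported sum `Σ_α F_α G_α`, followed by the substitution
`α ↦ α - k e_d` in the terms of `F_α G_α'`, gives the formula.
-/
open Function Real

namespace Polynomial

theorem derivative_hermite_succ (n : ℕ) :
    derivative (hermite (n + 1)) = C ((n : ℤ) + 1) * hermite n := by
  induction n with
  | zero => simp [hermite_zero]
  | succ n ih =>
    have hC : C ((n : ℤ) + 1 + 1) = C ((n : ℤ) + 1) + 1 := by rw [map_add, map_one]
    rw [hermite_succ (n + 1), derivative_sub, derivative_mul, derivative_X, one_mul, ih,
      derivative_mul, derivative_C, zero_mul, zero_add]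
    push_cast
    rw [hC, hermite_succ n]
    ring

end Polynomial

theorem He_succ (n : ℕ) (x : ℝ) :
    He (n + 1) x =
      x * He n x - Polynomial.aeval x (Polynomial.derivative (Polynomial.hermite n)) := by
  simp [He, Polynomial.hermite_succ]

theorem He_succ_succ (n : ℕ) (x : ℝ) :
    He (n + 2) x = x * He (n + 1) x - (n + 1) * He n x := by
  rw [He_succ (n + 1), Polynomial.derivative_hermite_succ]
  simp [He]

theorem hasDerivAt_He_mul_exp (n : ℕ) (x : ℝ) :
    HasDerivAt (fun y => He n y * exp (-y ^ 2 / 2)) (-(He (n + 1) x * exp (-x ^ 2 / 2))) x := by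
  have hquad : HasDerivAt (fun y : ℝ => -y ^ 2 / 2) (-x) x :=
    ((hasDerivAt_pow 2 x).neg.div_const 2).congr_deriv (by push_cast; ring)
  refine (((Polynomial.hermite n).hasDerivAt_aeval x).mul hquad.exp).congr_deriv ?_
  rw [He_succ, He]
  ring

noncomputable def hermiteFn (θ : ℝ) (n : ℕ) (x : ℝ) : ℝ :=
  (√(2 * π))⁻¹ * θ ^ (-(((n : ℝ) + 1) / 2)) * He n x * exp (-x ^ 2 / 2)

section hermiteFn

variable {θ : ℝ}

theorem sqrt_mul_rpow_succ (hθ : 0 < θ) (n : ℕ) :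
    √θ * θ ^ (-((((n + 1 : ℕ) : ℝ) + 1) / 2)) = θ ^ (-(((n : ℝ) + 1) / 2)) := by
  rw [sqrt_eq_rpow, ← rpow_add hθ]
  push_cast
  ring_nf

theorem mul_rpow_succ_succ (hθ : 0 < θ) (n : ℕ) :
    θ * θ ^ (-((((n + 2 : ℕ) : ℝ) + 1) / 2)) = θ ^ (-(((n : ℝ) + 1) / 2)) := by
  rw [mul_comm, ← rpow_add_one hθ.ne']
  push_cast
  ring_nf

theorem hasDerivAt_hermiteFn (hθ : 0 < θ) (n : ℕ) (x : ℝ) :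
    HasDerivAt (hermiteFn θ n) (-(√θ * hermiteFn θ (n + 1) x)) x := by
  have h := (hasDerivAt_He_mul_exp n x).const_mul ((√(2 * π))⁻¹ * θ ^ (-(((n : ℝ) + 1) / 2)))
  simp only [← mul_assoc] at h
  refine h.congr_deriv ?_
  rw [hermiteFn, ← sqrt_mul_rpow_succ hθ n]
  ring

theorem hermiteFn_succ_succ (hθ : 0 < θ) (n : ℕ) (x : ℝ) :
    θ * hermiteFn θ (n + 2) x = √θ * x * hermiteFn θ (n + 1) x - (n + 1) * hermiteFn θ n x := by
  simp only [hermiteFn, He_succ_succ]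
  linear_combination ((√(2 * π))⁻¹ * (x * He (n + 1) x - (n + 1) * He n x) * exp (-x ^ 2 / 2))
      * mul_rpow_succ_succ hθ n
    - (√(2 * π))⁻¹ * x * He (n + 1) x * exp (-x ^ 2 / 2) * sqrt_mul_rpow_succ hθ n

end hermiteFn

theorem Hb_eq_prod {D : ℕ} (θ : ℝ) (α : Fin D → ℕ) (x : Fin D → ℝ) :
    Hb θ α x = ∏ d, hermiteFn θ (α d) (x d) := rfl

noncomputable def scaledHb {D : ℕ} (θ a : ℝ) (w v : Fin D → ℝ) (α : Fin D → ℕ) (t : ℝ) : ℝ :=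
  (1 / (a * t + 1)) ^ (-(((∑ d, α d : ℕ) : ℤ) + (D : ℤ))) *
    Hb θ α (fun d => (a * t + 1) * v d + w d * t)

section scaledHb

variable {D : ℕ} (θ a : ℝ) (w v : Fin D → ℝ) (α : Fin D → ℕ)

theorem scaledHb_eq (t : ℝ) :
    scaledHb θ a w v α t = (a * t + 1) ^ (∑ d, (α d + 1)) *
      ∏ d, hermiteFn θ (α d) ((a * t + 1) * v d + w d * t) := by
  have hk : ((∑ d, α d : ℕ) : ℤ) + D = ((∑ d, (α d + 1) : ℕ) : ℤ) := by
    simp [Finset.sum_add_distrib]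
  rw [scaledHb, hk, one_div, inv_zpow', neg_neg, zpow_natCast, Hb_eq_prod]

theorem scaledHb_add_single (d : Fin D) (m : ℕ) (t : ℝ) :
    scaledHb θ a w v (α + Pi.single d m) t = (a * t + 1) ^ (∑ j, (α j + 1) + m) *
      (hermiteFn θ (α d + m) ((a * t + 1) * v d + w d * t) *
        ∏ j ∈ Finset.univ.erase d, hermiteFn θ (α j) ((a * t + 1) * v j + w j * t)) := by
  rw [scaledHb_eq, ← Finset.mul_prod_erase _ _ (Finset.mem_univ d)]
  congr 1
  · simp only [Pi.add_apply, Finset.sum_add_distrib, Finset.sum_pi_single', Finset.mem_univ,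
      if_true]
    ring
  · congr 1
    · simp
    · refine Finset.prod_congr rfl fun j hj => ?_
      simp [Finset.ne_of_mem_erase hj]

theorem hasDerivAt_scaledHb {θ : ℝ} (hθ : 0 < θ) {τ : ℝ} (hP : a * τ + 1 ≠ 0) :
    HasDerivAt (scaledHb θ a w v α)
      (-∑ d, (1 / (a * τ + 1)) ^ 2 *
        (θ * (a / (a * τ + 1)) * scaledHb θ a w v (α + Pi.single d 2) τ
          + w d * √θ * scaledHb θ a w v (α + Pi.single d 1) τ)) τ := by
  set k := ∑ d, (α d + 1) with hk
  have hline : HasDerivAt (fun t => a * t + 1) a τ := by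
    simpa using ((hasDerivAt_id τ).const_mul a).add_const 1
  have hfac (d : Fin D) : HasDerivAt (fun t => hermiteFn θ (α d) ((a * t + 1) * v d + w d * t))
      (-(√θ * hermiteFn θ (α d + 1) ((a * τ + 1) * v d + w d * τ)) * (a * v d + w d)) τ := by
    have hA : HasDerivAt (fun t => (a * t + 1) * v d + w d * t) (a * v d + w d) τ :=
      ((hline.mul_const (v d)).add ((hasDerivAt_id τ).const_mul (w d))).congr_deriv (by ring)
    exact (hasDerivAt_hermiteFn hθ (α d) _).comp τ hA
  rw [show scaledHb θ a w v α = _ from funext (scaledHb_eq θ a w v α)]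
  refine ((hline.pow k).mul (HasDerivAt.fun_finsetProd fun d _ => hfac d)).congr_deriv ?_
  have hkR : (k : ℝ) = ∑ d, ((α d : ℝ) + 1) := by push_cast [hk]; rfl
  simp only [scaledHb_add_single, hkR, Finset.sum_mul, Finset.mul_sum, smul_eq_mul,
    ← Finset.sum_add_distrib, ← Finset.sum_neg_distrib]
  refine Finset.sum_congr rfl fun d _ => ?_
  obtain ⟨j, hj⟩ : ∃ j, k = j + 1 := ⟨k - 1, by
    have := Finset.single_le_sum (fun i _ => Nat.zero_le (α i + 1)) (Finset.mem_univ d)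
    omega⟩
  rw [← Finset.mul_prod_erase _ _ (Finset.mem_univ d), hj]
  have hrec := hermiteFn_succ_succ hθ (α d) ((a * τ + 1) * v d + w d * τ)
  have hscale (X Y : ℝ) :
      (1 / (a * τ + 1)) ^ 2 * (θ * (a / (a * τ + 1)) * ((a * τ + 1) ^ (j + 1 + 2) * X)
        + w d * √θ * ((a * τ + 1) ^ (j + 1 + 1) * Y))
      = (a * τ + 1) ^ j * (θ * a * X + w d * √θ * Y) := by
    field_simp
    ring
  simp only [Pi.pow_apply, ← hk, hj, Nat.add_sub_cancel, hscale]
  linear_combination (a * (a * τ + 1) ^ j *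
    ∏ i ∈ Finset.univ.erase d, hermiteFn θ (α i) ((a * τ + 1) * v i + w i * τ)) * hrec

end scaledHb

section shiftedIndices

variable {ι : Type*} [DecidableEq ι]

theorem sub_ite_eq_sub_single (α : ι → ℕ) (d : ι) (m : ℕ) :
    (fun i => α i - if i = d then m else 0) = α - Pi.single d m := by
  ext i
  simp [Pi.single_apply]

theorem finsum_mul_ite_sub_single {R : Type*} [NonUnitalNonAssocSemiring R]
    (c f : (ι → ℕ) → R) (d : ι) (m : ℕ) :
    ∑ᶠ α, c α * (if m ≤ α d then f (α - Pi.single d m) else 0)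
      = ∑ᶠ β, c (β + Pi.single d m) * f β := by
  have hrange : Set.range (fun β : ι → ℕ => β + Pi.single d m) = {α : ι → ℕ | m ≤ α d} := by
    ext α
    refine ⟨?_, fun h => ⟨α - Pi.single d m, tsub_add_cancel_of_le fun i => ?_⟩⟩
    · rintro ⟨β, rfl⟩
      simp
    · by_cases hi : i = d
      · subst hi; simpa using h
      · simp [hi]
  calc _ = ∑ᶠ α ∈ Set.range (fun β : ι → ℕ => β + Pi.single d m), c α * f (α - Pi.single d m) := by
        rw [hrange, finsum_mem_def]
        congr 1
        ext α
        simp [Set.indicator_apply]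
    _ = _ := by
        rw [finsum_mem_range (add_left_injective _)]
        simp only [add_tsub_cancel_right]

theorem Function.HasFiniteSupport.mul_ite_sub_single {R : Type*} [MulZeroClass R]
    (c : (ι → ℕ) → R) {f : (ι → ℕ) → R} (hf : HasFiniteSupport f) (d : ι) (m : ℕ) :
    HasFiniteSupport fun α => c α * if m ≤ α d then f (α - Pi.single d m) else 0 := by
  refine (hf.image (fun β : ι → ℕ => β + Pi.single d m)).subset fun α hα => ?_
  by_cases h : m ≤ α d
  · refine ⟨α - Pi.single d m, fun hf0 => hα ?_, tsub_add_cancel_of_le fun i => ?_⟩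
    · simp [h, hf0]
    · by_cases hi : i = d
      · subst hi; simpa using h
      · simp [hi]
  · simp [h] at hα

end shiftedIndices

theorem finsum_sub_sum_add_distrib {κ ι M : Type*} [AddCommGroup M] {A : κ → M} {B C : ι → κ → M}
    (hA : HasFiniteSupport A) (hB : ∀ i, HasFiniteSupport (B i))
    (hC : ∀ i, HasFiniteSupport (C i)) (s : Finset ι) :
    ∑ᶠ a, (A a - ∑ i ∈ s, (B i a + C i a)) = ∑ᶠ a, A a - ∑ i ∈ s, (∑ᶠ a, B i a + ∑ᶠ a, C i a) := by
  rw [finsum_sub_distrib hA (HasFiniteSupport.sum (fun i => (hB i).fun_add (hC i)) s),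
    finsum_sum_comm s _ fun i _ => (hB i).fun_add (hC i)]
  exact congrArg _ (Finset.sum_congr rfl fun i _ => finsum_add_distrib (hB i) (hC i))

theorem finsum_mul_sub_lower_eq_raise {ι : Type*} [Fintype ι] [DecidableEq ι] {c f f' : (ι → ℕ) → ℝ}
    (hf : HasFiniteSupport f) (hf' : HasFiniteSupport f') (s r : ℝ) (b : ι → ℝ) :
    ∑ᶠ α, c α * (f' α - ∑ d, s * (r * (if 2 ≤ α d then f (α - Pi.single d 2) else 0)
        + b d * (if 1 ≤ α d then f (α - Pi.single d 1) else 0)))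
      = ∑ᶠ α, (f' α * c α + f α *
          -∑ d, s * (r * c (α + Pi.single d 2) + b d * c (α + Pi.single d 1))) := by
  have hlower (α : ι → ℕ) :
      c α * (f' α - ∑ d, s * (r * (if 2 ≤ α d then f (α - Pi.single d 2) else 0)
        + b d * (if 1 ≤ α d then f (α - Pi.single d 1) else 0)))
      = c α * f' α - ∑ d, (c α * (s * r) * (if 2 ≤ α d then f (α - Pi.single d 2) else 0)
        + c α * (s * b d) * (if 1 ≤ α d then f (α - Pi.single d 1) else 0)) := by
    rw [mul_sub, Finset.mul_sum]
    exact congrArg _ (Finset.sum_congr rfl fun d _ => by ring)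
  have hraise (α : ι → ℕ) : f' α * c α + f α *
        -∑ d, s * (r * c (α + Pi.single d 2) + b d * c (α + Pi.single d 1))
      = c α * f' α - ∑ d, (c (α + Pi.single d 2) * (s * r) * f α
        + c (α + Pi.single d 1) * (s * b d) * f α) := by
    rw [mul_neg, Finset.mul_sum, ← sub_eq_add_neg, mul_comm]
    exact congrArg _ (Finset.sum_congr rfl fun d _ => by ring)
  simp only [hlower, hraise]
  rw [finsum_sub_sum_add_distrib (hf'.fun_mul_right c) (fun d => hf.mul_ite_sub_single _ d 2)
      (fun d => hf.mul_ite_sub_single _ d 1),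
    finsum_sub_sum_add_distrib (hf'.fun_mul_right c) (fun d => hf.fun_mul_right _)
      (fun d => hf.fun_mul_right _)]
  simp only [finsum_mul_ite_sub_single]

section finsum

variable {𝕜 F ι : Type*} [NontriviallyNormedField 𝕜] [NormedAddCommGroup F] [NormedSpace 𝕜 F]
  {f : ι → 𝕜 → F} {f' : ι → F} {s : Set 𝕜} {x : 𝕜}

theorem support_subset_of_hasDerivWithinAt (hs : UniqueDiffWithinAt 𝕜 s x)
    (hf : ∀ i, HasDerivWithinAt (f i) (f' i) s x) : support f' ⊆ support f := fun i hi hfi =>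
  hi (hs.eq_deriv _ (hf i) (by rw [hfi]; exact hasDerivWithinAt_const x s 0))

theorem HasDerivWithinAt.finsum (hs : UniqueDiffWithinAt 𝕜 s x) (hfin : HasFiniteSupport f)
    (hf : ∀ i, HasDerivWithinAt (f i) (f' i) s x) :
    HasDerivWithinAt (fun t => ∑ᶠ i, f i t) (∑ᶠ i, f' i) s x := by
  have hsupp : support f ⊆ hfin.toFinset := hfin.coe_toFinset.superset
  have hfun : (fun t => ∑ᶠ i, f i t) = fun t => ∑ i ∈ hfin.toFinset, f i t :=
    funext fun t => finsum_eq_finsetSum_of_support_subset _ fun i hi =>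
      hsupp fun hfi => hi (by simp [hfi])
  rw [hfun, finsum_eq_finsetSum_of_support_subset _
    ((support_subset_of_hasDerivWithinAt hs hf).trans hsupp)]
  exact HasDerivWithinAt.fun_sum fun i _ => hf i

end finsum

theorem stmt16_general (D : ℕ) (θ₁ : ℝ) (hθ₁ : 0 < θ₁) (θh : ℝ) (hθh : 0 < θh)
    (w v : Fin D → ℝ)
    (A : ℝ → Fin D → ℝ)
    (hA : ∀ τ, A τ = fun d => ((θh - 1) * τ + 1) * v d + w d * τ)
    (R S : ℝ → ℝ)
    (hR : ∀ τ, R τ = (θh - 1) / ((θh - 1) * τ + 1))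
    (hS : ∀ τ, S τ = 1 / ((θh - 1) * τ + 1))
    (F F' : (Fin D → ℕ) → ℝ → ℝ)
    (hsupp : {α : Fin D → ℕ | F α ≠ 0}.Finite)
    (hderiv : ∀ α : Fin D → ℕ, ∀ τ ∈ Set.Icc (0 : ℝ) 1,
      HasDerivWithinAt (F α) (F' α τ) (Set.Icc (0 : ℝ) 1) τ) :
    ∀ τ ∈ Set.Icc (0 : ℝ) 1,
      HasDerivWithinAt
        (fun t => ∑ᶠ α : Fin D → ℕ,
          F α t * S t ^ (-(((∑ d, α d : ℕ) : ℤ) + (D : ℤ))) * Hb θ₁ α (A t))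
        (∑ᶠ α : Fin D → ℕ,
          S τ ^ (-(((∑ d, α d : ℕ) : ℤ) + (D : ℤ))) * Hb θ₁ α (A τ) *
            (F' α τ - ∑ d : Fin D, S τ ^ 2 *
              (θ₁ * R τ *
                  (if 2 ≤ α d then F (fun i => α i - (if i = d then 2 else 0)) τ else 0)
                + w d * Real.sqrt θ₁ *
                  (if 1 ≤ α d then F (fun i => α i - (if i = d then 1 else 0)) τ else 0))))
        (Set.Icc (0 : ℝ) 1) τ := by
  obtain rfl : A = fun τ d => ((θh - 1) * τ + 1) * v d + w d * τ := funext hA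
  obtain rfl : R = fun τ => (θh - 1) / ((θh - 1) * τ + 1) := funext hR
  obtain rfl : S = fun τ => 1 / ((θh - 1) * τ + 1) := funext hS
  intro τ hτ
  have hP : (θh - 1) * τ + 1 ≠ 0 := by
    obtain ⟨h0, h1⟩ := hτ
    rcases h1.lt_or_eq with h1 | rfl
    · nlinarith [mul_nonneg h0 hθh.le]
    · linarith
  have hU : UniqueDiffWithinAt ℝ (Set.Icc (0 : ℝ) 1) τ := uniqueDiffOn_Icc one_pos τ hτ
  have hFτ : HasFiniteSupport fun α => F α τ :=
    hsupp.subset fun α hα hF => hα (by simp [hF])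
  have hF'τ : HasFiniteSupport fun α => F' α τ :=
    hsupp.subset (support_subset_of_hasDerivWithinAt hU fun α => hderiv α τ hτ)
  have hderivG (α : Fin D → ℕ) := (hderiv α τ hτ).mul
    (hasDerivAt_scaledHb (θh - 1) w v α hθ₁ hP).hasDerivWithinAt
  have hsum := HasDerivWithinAt.finsum hU (HasFiniteSupport.mul_left hsupp _) hderivG
  simp only [sub_ite_eq_sub_single]
  refine (hsum.congr (fun t _ => finsum_congr fun α => mul_assoc _ _ _)
    (finsum_congr fun α => mul_assoc _ _ _)).congr_deriv ?_
  exact (finsum_mul_sub_lower_eq_raise hFτ hF'τ _ _ _).symm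

/-- for `F(v,τ) = Σ_α F_α(τ) S(τ)^{−(|α|+D)} 𝓗_{θ₁,α}(A(v,w,τ))` (the sum
being finitely supported),
`∂F/∂τ = Σ_α S^{−(|α|+D)} 𝓗_{θ₁,α}(A) {F_α' − Σ_d S²[θ₁ R F_{α−2e_d} + w_d √θ₁ F_{α−e_d}]}`,
with `F_β ≡ 0` whenever `β` has a negative component. -/
theorem stmt16 (D : ℕ) (hD : 1 ≤ D) (θ₁ : ℝ) (hθ₁ : 0 < θ₁) (θh : ℝ) (hθh : 0 < θh)
    (w v : Fin D → ℝ)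
    (A : ℝ → Fin D → ℝ)
    (hA : ∀ τ, A τ = fun d => ((θh - 1) * τ + 1) * v d + w d * τ)
    (R S : ℝ → ℝ)
    (hR : ∀ τ, R τ = (θh - 1) / ((θh - 1) * τ + 1))
    (hS : ∀ τ, S τ = 1 / ((θh - 1) * τ + 1))
    (F F' : (Fin D → ℕ) → ℝ → ℝ)
    (hsupp : {α : Fin D → ℕ | F α ≠ 0}.Finite)
    (hderiv : ∀ α : Fin D → ℕ, ∀ τ ∈ Set.Icc (0 : ℝ) 1,
      HasDerivWithinAt (F α) (F' α τ) (Set.Icc (0 : ℝ) 1) τ) :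
    ∀ τ ∈ Set.Icc (0 : ℝ) 1,
      HasDerivWithinAt
        (fun t => ∑ᶠ α : Fin D → ℕ,
          F α t * S t ^ (-(((∑ d, α d : ℕ) : ℤ) + (D : ℤ))) * Hb θ₁ α (A t))
        (∑ᶠ α : Fin D → ℕ,
          S τ ^ (-(((∑ d, α d : ℕ) : ℤ) + (D : ℤ))) * Hb θ₁ α (A τ) *
            (F' α τ - ∑ d : Fin D, S τ ^ 2 *
              (θ₁ * R τ *
                  (if 2 ≤ α d then F (fun i => α i - (if i = d then 2 else 0)) τ else 0)
                + w d * Real.sqrt θ₁ *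
                  (if 1 ≤ α d then F (fun i => α i - (if i = d then 1 else 0)) τ else 0))))
        (Set.Icc (0 : ℝ) 1) τ :=
  stmt16_general D θ₁ hθ₁ θh hθh w v A hA R S hR hS F F' hsupp hderiv
end
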